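/- arXiv:2204.12896 — 4 statements merged into one kernel-verified Lean document; each statement's English description precedes it below -/
import Mathlib

section
/- For every operator A on ℋ one has (1/2)⟨A*A + AA*⟩ ≤ (1/2)·√( (A,A) · ⟨[A*,[H,A]]⟩ ) + (A,A). -/
noncomputable section
open scoped BigOperators Matrix

/-- Gibbs state `⟨X⟩ = Tr(X e^{-H}) / Tr e^{-H}`. -/
def gibbsState (N : ℕ) (H X : Matrix (Fin N) (Fin N) ℂ) : ℂ :=
  (X * NormedSpace.exp (-H)).trace / (NormedSpace.exp (-H)).trace

/-- Duhamel inner product `(A,B) = (1/Z) ∫₀¹ Tr(e^{-(1-s)H} A* e^{-sH} B) ds`. -/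
def duhamelInner (N : ℕ) (H A B : Matrix (Fin N) (Fin N) ℂ) : ℂ :=
  (∫ s in (0:ℝ)..1,
      (NormedSpace.exp ((-(1 - (s : ℂ))) • H) * Aᴴ *
        NormedSpace.exp ((-(s : ℂ)) • H) * B).trace)
    / (NormedSpace.exp (-H)).trace

/-- The double commutator `[A*,[H,A]]`. -/
def dblComm (N : ℕ) (H A : Matrix (Fin N) (Fin N) ℂ) : Matrix (Fin N) (Fin N) ℂ :=
  Aᴴ * (H * A - A * H) - (H * A - A * H) * Aᴴ

/-- The Falk–Bruch function `Φ(s) = √s coth(1/√s)`. -/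
def PhiFB (s : ℝ) : ℝ :=
  Real.sqrt s * (Real.cosh (1 / Real.sqrt s) / Real.sinh (1 / Real.sqrt s))

/-! ### Auxiliary lemmas -/

/-- logarithmic mean as an integral -/
def lmInt (x y : ℝ) : ℝ := ∫ s in (0:ℝ)..1, Real.exp ((s-1)*x - s*y)

lemma lmInt_cont (x y : ℝ) : Continuous fun s : ℝ => Real.exp ((s-1)*x - s*y) := by
  fun_prop

lemma lmInt_ge_min (x y : ℝ) : min (Real.exp (-x)) (Real.exp (-y)) ≤ lmInt x y := by
  have h : ∀ s ∈ Set.Icc (0:ℝ) 1,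
      min (Real.exp (-x)) (Real.exp (-y)) ≤ Real.exp ((s-1)*x - s*y) := by
    intro s hs
    obtain ⟨h0, h1⟩ := hs
    have : min (-x) (-y) ≤ (s-1)*x - s*y := by
      rcases le_total (-x) (-y) with h | h
      · rw [min_eq_left h]
        nlinarith
      · rw [min_eq_right h]
        nlinarith
    calc min (Real.exp (-x)) (Real.exp (-y)) = Real.exp (min (-x) (-y)) := by
          rcases le_total (-x) (-y) with h | h <;>
            simp [min_eq_left, min_eq_right, h, Real.exp_le_exp.2 h]
      _ ≤ _ := Real.exp_le_exp.2 this
  calc min (Real.exp (-x)) (Real.exp (-y))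
      = ∫ s in (0:ℝ)..1, min (Real.exp (-x)) (Real.exp (-y)) := by simp
    _ ≤ lmInt x y := by
        apply intervalIntegral.integral_mono_on (by norm_num) (by simp)
          ((lmInt_cont x y).intervalIntegrable _ _) h

lemma lmInt_nonneg (x y : ℝ) : 0 ≤ lmInt x y :=
  le_trans (le_min (Real.exp_pos (-x)).le (Real.exp_pos (-y)).le) (lmInt_ge_min x y)

lemma lmInt_mul (x y : ℝ) : (y - x) * lmInt x y = Real.exp (-x) - Real.exp (-y) := by
  rcases eq_or_ne x y with rfl | hxy
  · simp
  · have hc : x - y ≠ 0 := sub_ne_zero.2 hxy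
    have : lmInt x y = ∫ s in (0:ℝ)..1, Real.exp (-x) * Real.exp ((x-y)*s) := by
      unfold lmInt
      congr 1; funext s
      rw [← Real.exp_add]; ring_nf
    rw [this, intervalIntegral.integral_const_mul]
    have h2 : (∫ s in (0:ℝ)..1, Real.exp ((x-y)*s)) = (x-y)⁻¹ * (Real.exp (x-y) - 1) := by
      rw [intervalIntegral.integral_comp_mul_left (fun u => Real.exp u) hc]
      simp [integral_exp]
    rw [h2]
    field_simp
    have h3 : Real.exp (-x) * Real.exp (x - y) = Real.exp (-y) := by
      rw [← Real.exp_add]; ring_nf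
    linear_combination (y - x) * h3

lemma core_ineq {ι : Type*} [Fintype ι] (Z : ℝ) (hZ : 0 < Z) (T L C u v : ι → ℝ)
    (hT : ∀ p, 0 ≤ T p) (hL : ∀ p, 0 ≤ L p) (hC : ∀ p, 0 ≤ C p)
    (hmin : ∀ p, min (u p) (v p) ≤ L p) (hLC : ∀ p, L p * C p = (u p - v p)^2) :
    (1/2) * ((∑ p, T p * (u p + v p)) / Z) ≤
      (1/2) * Real.sqrt (((∑ p, T p * L p)/Z) * ((∑ p, T p * C p)/Z))
        + (∑ p, T p * L p)/Z := by
  set SL := ∑ p, T p * L p with hSL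
  set SC := ∑ p, T p * C p with hSC
  have hSLnn : 0 ≤ SL := Finset.sum_nonneg fun p _ => mul_nonneg (hT p) (hL p)
  have hSCnn : 0 ≤ SC := Finset.sum_nonneg fun p _ => mul_nonneg (hT p) (hC p)
  have hpt : ∀ p : ι, T p * |u p - v p| =
      Real.sqrt (T p * L p) * Real.sqrt (T p * C p) := by
    intro p
    rw [← Real.sqrt_mul (mul_nonneg (hT p) (hL p))]
    have : T p * L p * (T p * C p) = (T p * |u p - v p|)^2 := by
      rw [mul_pow, sq_abs]
      linear_combination (T p)^2 * (hLC p)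
    rw [this, Real.sqrt_sq (mul_nonneg (hT p) (abs_nonneg _))]
  have hCS : (∑ p, T p * |u p - v p|) ≤ Real.sqrt (SL * SC) := by
    have h1 : (∑ p, T p * |u p - v p|)
        = ∑ p, Real.sqrt (T p * L p) * Real.sqrt (T p * C p) := by
      exact Finset.sum_congr rfl fun p _ => hpt p
    have h2 := Finset.sum_mul_sq_le_sq_mul_sq Finset.univ
      (fun p => Real.sqrt (T p * L p)) (fun p => Real.sqrt (T p * C p))
    have h3 : ∀ p : ι, Real.sqrt (T p * L p) ^ 2 = T p * L p := fun p =>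
      Real.sq_sqrt (mul_nonneg (hT p) (hL p))
    have h4 : ∀ p : ι, Real.sqrt (T p * C p) ^ 2 = T p * C p := fun p =>
      Real.sq_sqrt (mul_nonneg (hT p) (hC p))
    simp only [h3, h4] at h2
    rw [h1]
    have hnn : 0 ≤ ∑ p, Real.sqrt (T p * L p) * Real.sqrt (T p * C p) :=
      Finset.sum_nonneg fun p _ => mul_nonneg (Real.sqrt_nonneg _) (Real.sqrt_nonneg _)
    have := Real.sqrt_le_sqrt h2
    rwa [Real.sqrt_sq hnn] at this
  have hmain : (∑ p, T p * (u p + v p)) ≤ 2 * SL + Real.sqrt (SL * SC) := by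
    have hpt2 : ∀ p : ι, T p * (u p + v p) ≤ 2 * (T p * L p) + T p * |u p - v p| := by
      intro p
      have : u p + v p ≤ 2 * L p + |u p - v p| := by
        have := hmin p
        rcases le_total (u p) (v p) with h | h
        · rw [min_eq_left h] at this
          rw [abs_of_nonpos (by linarith)]; linarith
        · rw [min_eq_right h] at this
          rw [abs_of_nonneg (by linarith)]; linarith
      nlinarith [hT p, abs_nonneg (u p - v p)]
    calc (∑ p, T p * (u p + v p)) ≤ ∑ p, (2 * (T p * L p) + T p * |u p - v p|) :=
          Finset.sum_le_sum fun p _ => hpt2 p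
      _ = 2 * SL + ∑ p, T p * |u p - v p| := by rw [Finset.sum_add_distrib, ← Finset.mul_sum]
      _ ≤ 2 * SL + Real.sqrt (SL * SC) := by linarith
  have hsqrtdiv : Real.sqrt (SL / Z * (SC / Z)) = Real.sqrt (SL * SC) / Z := by
    have h : SL / Z * (SC / Z) = SL * SC / Z^2 := by ring
    rw [h, Real.sqrt_div (mul_nonneg hSLnn hSCnn), Real.sqrt_sq hZ.le]
  have hdiv := (div_le_div_iff_of_pos_right hZ).2 hmain
  have hexp : (2 * SL + Real.sqrt (SL * SC))/Z = 2*(SL/Z) + Real.sqrt (SL*SC)/Z := by ring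
  rw [hsqrtdiv]
  rw [hexp] at hdiv
  linarith

/-! ### Diagonal computations -/

variable {N : ℕ}

lemma trace_diag4 (p q : Fin N → ℂ) (M C : Matrix (Fin N) (Fin N) ℂ) :
    (Matrix.diagonal p * M * (Matrix.diagonal q * C)).trace
      = ∑ i, ∑ j, p i * M i j * (q j * C j i) := by
  simp only [Matrix.trace, Matrix.diag, Matrix.mul_apply, Matrix.diagonal_apply,
    ite_mul, zero_mul, Finset.sum_ite_eq, Finset.mem_univ, if_true]

lemma trace_mul_mul_diag (M C : Matrix (Fin N) (Fin N) ℂ) (q : Fin N → ℂ) :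
    (M * C * Matrix.diagonal q).trace = ∑ i, ∑ j, M i j * C j i * q i := by
  simp only [Matrix.trace, Matrix.diag, Matrix.mul_apply, Matrix.diagonal_apply,
    ite_mul, mul_ite, zero_mul, mul_zero, Finset.sum_ite_eq, Finset.sum_ite_eq',
    Finset.mem_univ, if_true, Finset.sum_mul]

lemma exp_smul_diag (c : ℂ) (d : Fin N → ℝ) :
    NormedSpace.exp (c • Matrix.diagonal (fun i => (d i : ℂ)))
      = Matrix.diagonal (fun i => Complex.exp (c * d i)) := by
  rw [← Matrix.diagonal_smul, Matrix.exp_diagonal, Pi.exp_def]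
  funext i
  simp [← Complex.exp_eq_exp_ℂ]

lemma exp_neg_diag (d : Fin N → ℝ) :
    NormedSpace.exp (-Matrix.diagonal (fun i => (d i : ℂ)))
      = Matrix.diagonal (fun i => (Real.exp (-d i) : ℂ)) := by
  rw [Matrix.diagonal_neg, Matrix.exp_diagonal, Pi.exp_def]
  funext i
  simp [← Complex.exp_eq_exp_ℂ, Complex.ofReal_exp, Complex.ofReal_neg]

lemma Ztrace (d : Fin N → ℝ) :
    (NormedSpace.exp (-Matrix.diagonal (fun i => (d i : ℂ)))).trace
      = ((∑ i, Real.exp (-d i) : ℝ) : ℂ) := by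
  rw [exp_neg_diag, Matrix.trace_diagonal]
  push_cast
  rfl

lemma gibbs_num (d : Fin N → ℝ) (B : Matrix (Fin N) (Fin N) ℂ) :
    ((Bᴴ * B + B * Bᴴ) * NormedSpace.exp (-Matrix.diagonal (fun i => (d i : ℂ)))).trace
      = ((∑ i, ∑ j, Complex.normSq (B j i) * (Real.exp (-d i) + Real.exp (-d j)) : ℝ) : ℂ) := by
  rw [exp_neg_diag, add_mul, Matrix.trace_add, trace_mul_mul_diag, trace_mul_mul_diag]
  have h2 : (∑ i, ∑ j, B i j * Bᴴ j i * ((Real.exp (-d i) : ℝ) : ℂ))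
      = ∑ i, ∑ j, Bᴴ i j * B j i * ((Real.exp (-d j) : ℝ) : ℂ) := by
    rw [Finset.sum_comm]
    exact Finset.sum_congr rfl fun i _ => Finset.sum_congr rfl fun j _ => by
      simp [Matrix.conjTranspose_apply]; ring
  rw [h2, ← Finset.sum_add_distrib]
  push_cast
  refine Finset.sum_congr rfl fun i _ => ?_
  rw [← Finset.sum_add_distrib]
  refine Finset.sum_congr rfl fun j _ => ?_
  have hz : (Bᴴ i j) * B j i = ((Complex.normSq (B j i) : ℝ) : ℂ) := by
    rw [Matrix.conjTranspose_apply, Complex.star_def, ← Complex.normSq_eq_conj_mul_self]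
  rw [hz]
  push_cast
  ring

lemma dbl_num (d : Fin N → ℝ) (B : Matrix (Fin N) (Fin N) ℂ) :
    ((dblComm N (Matrix.diagonal (fun i => (d i : ℂ))) B)
        * NormedSpace.exp (-Matrix.diagonal (fun i => (d i : ℂ)))).trace
      = ((∑ i, ∑ j, Complex.normSq (B j i) *
          ((d j - d i) * (Real.exp (-d i) - Real.exp (-d j))) : ℝ) : ℂ) := by
  rw [exp_neg_diag]
  set D := Matrix.diagonal (fun i => (d i : ℂ)) with hD
  have hexp : dblComm N D B = Bᴴ * (D * B - B * D) - (D * B - B * D) * Bᴴ := rfl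
  rw [hexp, sub_mul, Matrix.trace_sub, trace_mul_mul_diag, trace_mul_mul_diag]
  have hC : ∀ i j, (D * B - B * D) i j = (((d i : ℝ) : ℂ) - ((d j : ℝ) : ℂ)) * B i j := by
    intro i j
    simp only [hD, Matrix.sub_apply, Matrix.diagonal_mul, Matrix.mul_diagonal]
    ring
  have hz : ∀ i j, (Bᴴ i j) * B j i = ((Complex.normSq (B j i) : ℝ) : ℂ) := by
    intro i j
    rw [Matrix.conjTranspose_apply, Complex.star_def, ← Complex.normSq_eq_conj_mul_self]
  have h1 : (∑ i, ∑ j, Bᴴ i j * (D * B - B * D) j i * ((Real.exp (-d i) : ℝ) : ℂ))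
      = ∑ i, ∑ j, ((Complex.normSq (B j i) : ℝ) : ℂ) *
          ((((d j : ℝ) : ℂ) - ((d i : ℝ) : ℂ)) * ((Real.exp (-d i) : ℝ) : ℂ)) := by
    refine Finset.sum_congr rfl fun i _ => Finset.sum_congr rfl fun j _ => ?_
    rw [hC j i]
    linear_combination ((((d j : ℝ) : ℂ) - ((d i : ℝ) : ℂ)) * ((Real.exp (-d i) : ℝ) : ℂ)) * hz i j
  have h2 : (∑ i, ∑ j, (D * B - B * D) i j * Bᴴ j i * ((Real.exp (-d i) : ℝ) : ℂ))
      = ∑ i, ∑ j, ((Complex.normSq (B j i) : ℝ) : ℂ) *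
          ((((d j : ℝ) : ℂ) - ((d i : ℝ) : ℂ)) * ((Real.exp (-d j) : ℝ) : ℂ)) := by
    rw [Finset.sum_comm]
    refine Finset.sum_congr rfl fun i _ => Finset.sum_congr rfl fun j _ => ?_
    rw [hC j i]
    linear_combination ((((d j : ℝ) : ℂ) - ((d i : ℝ) : ℂ)) * ((Real.exp (-d j) : ℝ) : ℂ)) * hz i j
  rw [h1, h2, ← Finset.sum_sub_distrib]
  push_cast
  refine Finset.sum_congr rfl fun i _ => ?_
  rw [← Finset.sum_sub_distrib]
  refine Finset.sum_congr rfl fun j _ => ?_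
  ring

lemma duh_pt (d : Fin N → ℝ) (B : Matrix (Fin N) (Fin N) ℂ) (s : ℝ) :
    (NormedSpace.exp ((-(1 - (s : ℂ))) • Matrix.diagonal (fun i => (d i : ℂ))) * Bᴴ *
        NormedSpace.exp ((-(s : ℂ)) • Matrix.diagonal (fun i => (d i : ℂ))) * B).trace
      = ((∑ i, ∑ j, Complex.normSq (B j i) * Real.exp ((s-1)*(d i) - s*(d j)) : ℝ) : ℂ) := by
  rw [mul_assoc (NormedSpace.exp _ * Bᴴ), exp_smul_diag, exp_smul_diag, trace_diag4]
  have hz : ∀ i j, (Bᴴ i j) * B j i = ((Complex.normSq (B j i) : ℝ) : ℂ) := by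
    intro i j
    rw [Matrix.conjTranspose_apply, Complex.star_def, ← Complex.normSq_eq_conj_mul_self]
  push_cast
  refine Finset.sum_congr rfl fun i _ => Finset.sum_congr rfl fun j _ => ?_
  have e1 : (-(1-(s:ℂ))) * ((d i:ℝ):ℂ) = (((s-1)*d i : ℝ) : ℂ) := by push_cast; ring
  have e2 : (-(s:ℂ)) * ((d j:ℝ):ℂ) = ((-(s*d j) : ℝ) : ℂ) := by push_cast; ring
  rw [e1, e2]
  have e4 : ((s:ℂ) - 1) * ((d i:ℝ):ℂ) - (s:ℂ) * ((d j:ℝ):ℂ)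
      = (((s-1)*d i : ℝ) : ℂ) + ((-(s*d j) : ℝ) : ℂ) := by push_cast; ring
  rw [e4, Complex.exp_add]
  linear_combination (Complex.exp (((s-1)*d i : ℝ):ℂ) * Complex.exp ((-(s*d j) : ℝ):ℂ)) * hz i j

lemma duh_num (d : Fin N → ℝ) (B : Matrix (Fin N) (Fin N) ℂ) :
    (∫ s in (0:ℝ)..1,
        (NormedSpace.exp ((-(1 - (s : ℂ))) • Matrix.diagonal (fun i => (d i : ℂ))) * Bᴴ *
          NormedSpace.exp ((-(s : ℂ)) • Matrix.diagonal (fun i => (d i : ℂ))) * B).trace)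
      = ((∑ i, ∑ j, Complex.normSq (B j i) * lmInt (d i) (d j) : ℝ) : ℂ) := by
  have h1 : (∫ s in (0:ℝ)..1,
        (NormedSpace.exp ((-(1 - (s : ℂ))) • Matrix.diagonal (fun i => (d i : ℂ))) * Bᴴ *
          NormedSpace.exp ((-(s : ℂ)) • Matrix.diagonal (fun i => (d i : ℂ))) * B).trace)
      = ∫ s in (0:ℝ)..1,
          ((∑ i, ∑ j, Complex.normSq (B j i) * Real.exp ((s-1)*(d i) - s*(d j)) : ℝ) : ℂ) := by
    exact intervalIntegral.integral_congr fun s _ => duh_pt d B s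
  rw [h1, intervalIntegral.integral_ofReal]
  norm_cast
  rw [intervalIntegral.integral_finset_sum
    (fun i _ => ((by fun_prop : Continuous fun s : ℝ =>
      ∑ j, Complex.normSq (B j i) * Real.exp ((s-1)*(d i) - s*(d j))).intervalIntegrable 0 1))]
  refine Finset.sum_congr rfl fun i _ => ?_
  rw [intervalIntegral.integral_finset_sum
    (fun j _ => ((by fun_prop : Continuous fun s : ℝ =>
      Complex.normSq (B j i) * Real.exp ((s-1)*(d i) - s*(d j))).intervalIntegrable 0 1))]
  refine Finset.sum_congr rfl fun j _ => ?_
  rw [intervalIntegral.integral_const_mul]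
  rfl

/-! ### Conjugation reduction -/

section conj
variable (V D A : Matrix (Fin N) (Fin N) ℂ)

lemma exp_conj_V (hVU : V * star V = 1) (hUV : star V * V = 1)
    (M : Matrix (Fin N) (Fin N) ℂ) :
    NormedSpace.exp (V * M * star V) = V * NormedSpace.exp M * star V := by
  have := Matrix.exp_units_conj (Units.mk V (star V) hVU hUV) M
  simpa using this

lemma conj_mul_conj (hUV : star V * V = 1) (X Y : Matrix (Fin N) (Fin N) ℂ) :
    (V * X * star V) * (V * Y * star V) = V * (X * Y) * star V := by
  calc (V * X * star V) * (V * Y * star V) = V * X * (star V * V) * Y * star V := by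
        simp only [mul_assoc]
    _ = V * (X * Y) * star V := by rw [hUV]; simp only [mul_assoc, one_mul]

lemma trace_conj (hUV : star V * V = 1) (M : Matrix (Fin N) (Fin N) ℂ) :
    (V * M * star V).trace = M.trace := by
  rw [Matrix.trace_mul_cycle, hUV, one_mul]

lemma conj_back (hVU : V * star V = 1) : V * (star V * A * V) * star V = A := by
  calc V * (star V * A * V) * star V = (V * star V) * A * (V * star V) := by
        simp only [mul_assoc]
    _ = A := by rw [hVU]; simp

lemma conjT_conj (X : Matrix (Fin N) (Fin N) ℂ) :
    (V * X * star V)ᴴ = V * Xᴴ * star V := by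
  simp only [Matrix.conjTranspose_mul, Matrix.star_eq_conjTranspose,
    Matrix.conjTranspose_conjTranspose, mul_assoc]

lemma gibbs_red (hVU : V * star V = 1) (hUV : star V * V = 1)
    (X : Matrix (Fin N) (Fin N) ℂ) :
    gibbsState N (V * D * star V) (V * X * star V) = gibbsState N D X := by
  unfold gibbsState
  have hnH : -(V * D * star V) = V * (-D) * star V := by
    simp [Matrix.neg_mul, Matrix.mul_neg]
  rw [hnH, exp_conj_V V hVU hUV, conj_mul_conj V hUV, trace_conj V hUV, trace_conj V hUV]

lemma dbl_red (hUV : star V * V = 1) :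
    dblComm N (V * D * star V) (V * A * star V) = V * dblComm N D A * star V := by
  unfold dblComm
  rw [conjT_conj]
  rw [conj_mul_conj V hUV D A, conj_mul_conj V hUV A D,
    show V*(D*A)*star V - V*(A*D)*star V = V*(D*A - A*D)*star V by
      rw [← Matrix.sub_mul, ← Matrix.mul_sub]]
  rw [conj_mul_conj V hUV, conj_mul_conj V hUV, ← Matrix.sub_mul, ← Matrix.mul_sub]

lemma duh_red (hVU : V * star V = 1) (hUV : star V * V = 1) :
    duhamelInner N (V * D * star V) (V * A * star V) (V * A * star V)
      = duhamelInner N D A A := by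
  unfold duhamelInner
  have h1 : ∀ c : ℂ, NormedSpace.exp (c • (V * D * star V))
      = V * NormedSpace.exp (c • D) * star V := by
    intro c
    have h2 : c • (V * D * star V) = V * (c • D) * star V := by
      simp [mul_smul_comm, smul_mul_assoc]
    rw [h2, exp_conj_V V hVU hUV]
  have hden : (NormedSpace.exp (-(V * D * star V))).trace
      = (NormedSpace.exp (-D)).trace := by
    have hnH : -(V * D * star V) = V * (-D) * star V := by
      simp [Matrix.neg_mul, Matrix.mul_neg]
    rw [hnH, exp_conj_V V hVU hUV, trace_conj V hUV]
  have hnum : (∫ s in (0:ℝ)..1,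
      (NormedSpace.exp ((-(1 - (s : ℂ))) • (V * D * star V)) * (V * A * star V)ᴴ *
        NormedSpace.exp ((-(s : ℂ)) • (V * D * star V)) * (V * A * star V)).trace)
      = ∫ s in (0:ℝ)..1,
      (NormedSpace.exp ((-(1 - (s : ℂ))) • D) * Aᴴ *
        NormedSpace.exp ((-(s : ℂ)) • D) * A).trace := by
    apply intervalIntegral.integral_congr
    intro s _
    simp only [h1, conjT_conj]
    rw [conj_mul_conj V hUV, conj_mul_conj V hUV, conj_mul_conj V hUV, trace_conj V hUV]
  rw [hnum, hden]
end conj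

/-! ### The diagonal case -/

lemma diag_case (N : ℕ) (d : Fin N → ℝ) (B : Matrix (Fin N) (Fin N) ℂ) :
    (1/2) * (gibbsState N (Matrix.diagonal fun i => (d i : ℂ)) (Bᴴ * B + B * Bᴴ)).re
      ≤ (1/2) * Real.sqrt ((duhamelInner N (Matrix.diagonal fun i => (d i : ℂ)) B B).re *
            (gibbsState N (Matrix.diagonal fun i => (d i : ℂ))
              (dblComm N (Matrix.diagonal fun i => (d i : ℂ)) B)).re)
        + (duhamelInner N (Matrix.diagonal fun i => (d i : ℂ)) B B).re := by
  set Z : ℝ := ∑ i, Real.exp (-d i) with hZdef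
  have hg : (gibbsState N (Matrix.diagonal fun i => (d i : ℂ)) (Bᴴ * B + B * Bᴴ)).re
      = (∑ i, ∑ j, Complex.normSq (B j i) * (Real.exp (-d i) + Real.exp (-d j))) / Z := by
    unfold gibbsState
    rw [gibbs_num, Ztrace, ← Complex.ofReal_div, Complex.ofReal_re]
  have hduh : (duhamelInner N (Matrix.diagonal fun i => (d i : ℂ)) B B).re
      = (∑ i, ∑ j, Complex.normSq (B j i) * lmInt (d i) (d j)) / Z := by
    unfold duhamelInner
    rw [duh_num, Ztrace, ← Complex.ofReal_div, Complex.ofReal_re]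
  have hdbl : (gibbsState N (Matrix.diagonal fun i => (d i : ℂ))
      (dblComm N (Matrix.diagonal fun i => (d i : ℂ)) B)).re
      = (∑ i, ∑ j, Complex.normSq (B j i) *
          ((d j - d i) * (Real.exp (-d i) - Real.exp (-d j)))) / Z := by
    unfold gibbsState
    rw [dbl_num, Ztrace, ← Complex.ofReal_div, Complex.ofReal_re]
  rw [hg, hduh, hdbl]
  rcases Nat.eq_zero_or_pos N with hN | hN
  · subst hN
    simp [Finset.univ_eq_empty]
  · have hZ : 0 < Z := Finset.sum_pos (fun i _ => Real.exp_pos _)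
      ⟨⟨0, hN⟩, Finset.mem_univ _⟩
    have := core_ineq (ι := Fin N × Fin N) Z hZ
      (fun p => Complex.normSq (B p.2 p.1))
      (fun p => lmInt (d p.1) (d p.2))
      (fun p => (d p.2 - d p.1) * (Real.exp (-d p.1) - Real.exp (-d p.2)))
      (fun p => Real.exp (-d p.1)) (fun p => Real.exp (-d p.2))
      (fun p => Complex.normSq_nonneg _)
      (fun p => lmInt_nonneg _ _)
      (fun p => by
        show 0 ≤ (d p.2 - d p.1) * (Real.exp (-d p.1) - Real.exp (-d p.2))
        rcases le_total (d p.1) (d p.2) with h | h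
        · exact mul_nonneg (by linarith) (by
            have := Real.exp_le_exp.2 (neg_le_neg h); linarith)
        · have h2 := Real.exp_le_exp.2 (neg_le_neg h)
          nlinarith [mul_nonneg (sub_nonneg.2 h) (sub_nonneg.2 h2)])
      (fun p => lmInt_ge_min _ _)
      (fun p => by
        have h := lmInt_mul (d p.1) (d p.2)
        linear_combination (Real.exp (-d p.1) - Real.exp (-d p.2)) * h)
    simpa [Fintype.sum_prod_type] using this

theorem stmt9 (N : ℕ) (H : Matrix (Fin N) (Fin N) ℂ) (hH : H.IsHermitian)
    (A : Matrix (Fin N) (Fin N) ℂ) :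
    (1/2) * (gibbsState N H (Aᴴ * A + A * Aᴴ)).re
      ≤ (1/2) * Real.sqrt ((duhamelInner N H A A).re *
            (gibbsState N H (dblComm N H A)).re)
        + (duhamelInner N H A A).re := by
  set V : Matrix (Fin N) (Fin N) ℂ := (Matrix.IsHermitian.eigenvectorUnitary hH :
    Matrix (Fin N) (Fin N) ℂ) with hV
  set d : Fin N → ℝ := hH.eigenvalues with hd
  have hmem := (Matrix.IsHermitian.eigenvectorUnitary hH).2
  have hVU : V * star V = 1 := (Matrix.mem_unitaryGroup_iff.mp hmem)
  have hUV : star V * V = 1 := (Matrix.mem_unitaryGroup_iff'.mp hmem)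
  have hspec : H = V * Matrix.diagonal (fun i => (d i : ℂ)) * star V := by
    have := hH.spectral_theorem
    rw [Unitary.conjStarAlgAut_apply] at this
    exact this
  obtain ⟨B, hA⟩ : ∃ B, A = V * B * star V := ⟨star V * A * V, (conj_back V A hVU).symm⟩
  subst hA
  rw [hspec]
  have e1 : gibbsState N (V * Matrix.diagonal (fun i => (d i : ℂ)) * star V)
      ((V * B * star V)ᴴ * (V * B * star V) + (V * B * star V) * (V * B * star V)ᴴ)
      = gibbsState N (Matrix.diagonal (fun i => (d i : ℂ))) (Bᴴ * B + B * Bᴴ) := by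
    rw [conjT_conj, conj_mul_conj V hUV, conj_mul_conj V hUV,
      show V*(Bᴴ*B)*star V + V*(B*Bᴴ)*star V = V*(Bᴴ*B + B*Bᴴ)*star V by
        rw [← Matrix.add_mul, ← Matrix.mul_add]]
    exact gibbs_red V _ hVU hUV _
  have e2 : duhamelInner N (V * Matrix.diagonal (fun i => (d i : ℂ)) * star V)
      (V * B * star V) (V * B * star V)
      = duhamelInner N (Matrix.diagonal (fun i => (d i : ℂ))) B B :=
    duh_red V _ B hVU hUV
  have e3 : gibbsState N (V * Matrix.diagonal (fun i => (d i : ℂ)) * star V)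
      (dblComm N (V * Matrix.diagonal (fun i => (d i : ℂ)) * star V) (V * B * star V))
      = gibbsState N (Matrix.diagonal (fun i => (d i : ℂ)))
          (dblComm N (Matrix.diagonal (fun i => (d i : ℂ))) B) := by
    rw [dbl_red V _ B hUV]
    exact gibbs_red V _ hVU hUV _
  rw [e1, e2, e3]
  exact diag_case N d B
end
end

section
/- (Bogolubov's inequality.) For all operators A, B on ℋ one has |⟨[B,A*]⟩|² ≤ (1/2)⟨A*A + AA*⟩ · ⟨[[B,H],B*]⟩. -/
noncomputable section
open scoped BigOperators Matrix

namespace BogolubovAux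

/- ------------------ scalar inequalities ------------------- -/

lemma aux_deriv2 : MonotoneOn (fun t : ℝ => t * Real.exp t + 1 - Real.exp t) (Set.Ici 0) := by
  have hd : ∀ t : ℝ, HasDerivAt (fun t : ℝ => t * Real.exp t + 1 - Real.exp t)
      (t * Real.exp t) t := by
    intro t
    have h1 : HasDerivAt (fun t : ℝ => t * Real.exp t) (1 * Real.exp t + t * Real.exp t) t :=
      (hasDerivAt_id t).mul (Real.hasDerivAt_exp t)
    have := ((h1.add_const 1).sub (Real.hasDerivAt_exp t))
    rw [show t * Real.exp t = 1 * Real.exp t + t * Real.exp t - Real.exp t by ring]; exact this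
  apply monotoneOn_of_deriv_nonneg (convex_Ici 0)
  · exact Continuous.continuousOn (by continuity)
  · intro x hx; exact (hd x).differentiableAt.differentiableWithinAt
  · intro x hx
    rw [interior_Ici] at hx
    rw [(hd x).deriv]
    have hx' : (0:ℝ) < x := hx
    positivity

lemma aux_f_nonneg {t : ℝ} (ht : 0 ≤ t) : 0 ≤ t * Real.exp t + t + 2 - 2 * Real.exp t := by
  have hd : ∀ t : ℝ, HasDerivAt (fun t : ℝ => t * Real.exp t + t + 2 - 2 * Real.exp t)
      (t * Real.exp t + 1 - Real.exp t) t := by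
    intro t
    have h1 : HasDerivAt (fun t : ℝ => t * Real.exp t) (1 * Real.exp t + t * Real.exp t) t :=
      (hasDerivAt_id t).mul (Real.hasDerivAt_exp t)
    have := (((h1.add (hasDerivAt_id t)).add_const 2).sub ((Real.hasDerivAt_exp t).const_mul 2))
    rw [show t * Real.exp t + 1 - Real.exp t
      = 1 * Real.exp t + t * Real.exp t + 1 - 2 * Real.exp t by ring]; exact this
  have hmono : MonotoneOn (fun t : ℝ => t * Real.exp t + t + 2 - 2 * Real.exp t) (Set.Ici 0) := by
    apply monotoneOn_of_deriv_nonneg (convex_Ici 0)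
    · exact Continuous.continuousOn (by continuity)
    · intro x hx; exact (hd x).differentiableAt.differentiableWithinAt
    · intro x hx
      rw [interior_Ici] at hx
      rw [(hd x).deriv]
      have h0 := aux_deriv2 (Set.mem_Ici.mpr le_rfl) (Set.mem_Ici.mpr hx.le) hx.le
      simpa using h0
  have := hmono (Set.mem_Ici.mpr le_rfl) (Set.mem_Ici.mpr ht) ht
  simpa using this

lemma key_scalar {t : ℝ} (ht : 0 ≤ t) :
    2 * (1 - Real.exp (-t)) ≤ t * (1 + Real.exp (-t)) := by
  have h : 0 ≤ t * Real.exp t + t + 2 - 2 * Real.exp t := aux_f_nonneg ht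
  have he : (0:ℝ) < Real.exp t := Real.exp_pos t
  rw [← sub_nonneg]
  have heq : t * (1 + Real.exp (-t)) - 2 * (1 - Real.exp (-t))
      = (t * Real.exp t + t + 2 - 2 * Real.exp t) / Real.exp t := by
    rw [Real.exp_neg]
    field_simp
    ring
  rw [heq]
  positivity

lemma slope_le_avg {a b : ℝ} (hab : a < b) :
    (Real.exp (-a) - Real.exp (-b)) / (b - a) ≤ (Real.exp (-a) + Real.exp (-b)) / 2 := by
  have ht : (0:ℝ) < b - a := by linarith
  rw [div_le_div_iff₀ ht (by norm_num)]
  have hb : Real.exp (-b) = Real.exp (-a) * Real.exp (-(b-a)) := by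
    rw [← Real.exp_add]; ring_nf
  have hk := key_scalar ht.le
  have hea : (0:ℝ) < Real.exp (-a) := Real.exp_pos _
  calc (Real.exp (-a) - Real.exp (-b)) * 2
      = Real.exp (-a) * (2 * (1 - Real.exp (-(b-a)))) := by rw [hb]; ring
    _ ≤ Real.exp (-a) * ((b-a) * (1 + Real.exp (-(b-a)))) :=
        mul_le_mul_of_nonneg_left hk hea.le
    _ = (Real.exp (-a) + Real.exp (-b)) * (b - a) := by rw [hb]; ring

/-- weight `(e^{-a} - e^{-b})/(b-a)` (zero when `a = b`). -/
def gw (a b : ℝ) : ℝ := if a = b then 0 else (Real.exp (-a) - Real.exp (-b)) / (b - a)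

lemma gw_symm (a b : ℝ) : gw a b = gw b a := by
  unfold gw
  rcases eq_or_ne a b with h | h
  · simp [h]
  · rw [if_neg h, if_neg (Ne.symm h)]
    rw [div_eq_div_iff (sub_ne_zero.mpr (Ne.symm h)) (sub_ne_zero.mpr h)]
    ring

lemma gw_nonneg (a b : ℝ) : 0 ≤ gw a b := by
  rcases lt_trichotomy a b with h | h | h
  · rw [gw, if_neg h.ne]
    apply div_nonneg _ (by linarith)
    have := Real.exp_le_exp.mpr (neg_le_neg h.le)
    linarith
  · simp [gw, h]
  · rw [gw_symm, gw, if_neg h.ne]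
    apply div_nonneg _ (by linarith)
    have := Real.exp_le_exp.mpr (neg_le_neg h.le)
    linarith

lemma gw_mul (a b : ℝ) : gw a b * (b - a) = Real.exp (-a) - Real.exp (-b) := by
  rcases eq_or_ne a b with h | h
  · simp [gw, h]
  · rw [gw, if_neg h, div_mul_cancel₀ _ (sub_ne_zero.mpr (Ne.symm h))]

lemma gw_le_avg (a b : ℝ) : gw a b ≤ (Real.exp (-a) + Real.exp (-b)) / 2 := by
  rcases lt_trichotomy a b with h | h | h
  · rw [gw, if_neg h.ne]; exact slope_le_avg h
  · subst h; rw [gw, if_pos rfl]; positivity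
  · rw [gw_symm, gw, if_neg h.ne]
    calc (Real.exp (-b) - Real.exp (-a)) / (a - b) ≤ (Real.exp (-b) + Real.exp (-a)) / 2 :=
          slope_le_avg h
      _ = (Real.exp (-a) + Real.exp (-b)) / 2 := by ring

/- ------------------ the core sum inequality ------------------- -/

lemma core (N : ℕ) (E : Fin N → ℝ) (A B : Matrix (Fin N) (Fin N) ℂ) :
    ‖∑ n, ∑ m, B n m * (starRingEnd ℂ) (A n m) *
        ((Real.exp (-E n) - Real.exp (-E m) : ℝ) : ℂ)‖ ^ 2
      ≤ (1/2) * (∑ n, ∑ m, ‖A n m‖ ^ 2 * (Real.exp (-E n) + Real.exp (-E m)))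
        * (∑ n, ∑ m, ‖B n m‖ ^ 2 *
            ((E m - E n) * (Real.exp (-E n) - Real.exp (-E m)))) := by
  classical
  set g : Fin N → Fin N → ℝ := fun n m => gw (E n) (E m) with hg
  have gnn : ∀ n m, 0 ≤ g n m := fun n m => gw_nonneg _ _
  have gmul : ∀ n m, g n m * (E m - E n) = Real.exp (-E n) - Real.exp (-E m) :=
    fun n m => gw_mul _ _
  have habs : ‖∑ n, ∑ m, B n m * (starRingEnd ℂ) (A n m) *
        ((Real.exp (-E n) - Real.exp (-E m) : ℝ) : ℂ)‖
      ≤ ∑ n, ∑ m, (Real.sqrt (g n m) * ‖A n m‖) *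
          (Real.sqrt (g n m) * (‖B n m‖ * |E m - E n|)) := by
    refine le_trans (norm_sum_le _ _) (Finset.sum_le_sum fun n _ => ?_)
    refine le_trans (norm_sum_le _ _) (Finset.sum_le_sum fun m _ => ?_)
    rw [norm_mul, norm_mul, Complex.norm_conj, Complex.norm_real, Real.norm_eq_abs]
    have h1 : |Real.exp (-E n) - Real.exp (-E m)| = g n m * |E m - E n| := by
      rw [← gmul n m, abs_mul, abs_of_nonneg (gnn n m)]
    rw [h1]
    have h2 : Real.sqrt (g n m) * Real.sqrt (g n m) = g n m := Real.mul_self_sqrt (gnn n m)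
    apply le_of_eq
    linear_combination (‖A n m‖ * ‖B n m‖ * |E m - E n|) * h2.symm
  have hCS : (∑ p : Fin N × Fin N, (Real.sqrt (g p.1 p.2) * ‖A p.1 p.2‖) *
          (Real.sqrt (g p.1 p.2) * (‖B p.1 p.2‖ * |E p.2 - E p.1|))) ^ 2
      ≤ (∑ p : Fin N × Fin N, (Real.sqrt (g p.1 p.2) * ‖A p.1 p.2‖) ^ 2)
        * (∑ p : Fin N × Fin N,
            (Real.sqrt (g p.1 p.2) * (‖B p.1 p.2‖ * |E p.2 - E p.1|)) ^ 2) :=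
    Finset.sum_mul_sq_le_sq_mul_sq _ _ _
  rw [Fintype.sum_prod_type] at hCS
  rw [Fintype.sum_prod_type] at hCS
  rw [Fintype.sum_prod_type] at hCS
  have hA : (∑ n, ∑ m, (Real.sqrt (g n m) * ‖A n m‖) ^ 2)
      ≤ (1/2) * (∑ n, ∑ m, ‖A n m‖ ^ 2 * (Real.exp (-E n) + Real.exp (-E m))) := by
    rw [Finset.mul_sum]
    refine Finset.sum_le_sum fun n _ => ?_
    rw [Finset.mul_sum]
    refine Finset.sum_le_sum fun m _ => ?_
    rw [mul_pow, Real.sq_sqrt (gnn n m)]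
    have hle := gw_le_avg (E n) (E m)
    calc g n m * ‖A n m‖ ^ 2
        ≤ (Real.exp (-E n) + Real.exp (-E m)) / 2 * ‖A n m‖ ^ 2 :=
          mul_le_mul_of_nonneg_right hle (by positivity)
      _ = 1/2 * (‖A n m‖ ^ 2 * (Real.exp (-E n) + Real.exp (-E m))) := by ring
  have hB : (∑ n, ∑ m, (Real.sqrt (g n m) * (‖B n m‖ * |E m - E n|)) ^ 2)
      = ∑ n, ∑ m, ‖B n m‖ ^ 2 *
            ((E m - E n) * (Real.exp (-E n) - Real.exp (-E m))) := by
    refine Finset.sum_congr rfl fun n _ => Finset.sum_congr rfl fun m _ => ?_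
    rw [mul_pow, mul_pow, Real.sq_sqrt (gnn n m), sq_abs]
    linear_combination (‖B n m‖ ^ 2 * (E m - E n)) * gmul n m
  have hBnn : (0:ℝ) ≤ ∑ n, ∑ m, ‖B n m‖ ^ 2 *
            ((E m - E n) * (Real.exp (-E n) - Real.exp (-E m))) := by
    rw [← hB]
    apply Finset.sum_nonneg; intro n _; apply Finset.sum_nonneg; intro m _; positivity
  rw [hB] at hCS
  calc ‖∑ n, ∑ m, B n m * (starRingEnd ℂ) (A n m) *
        ((Real.exp (-E n) - Real.exp (-E m) : ℝ) : ℂ)‖ ^ 2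
      ≤ (∑ n, ∑ m, (Real.sqrt (g n m) * ‖A n m‖) *
          (Real.sqrt (g n m) * (‖B n m‖ * |E m - E n|))) ^ 2 :=
        pow_le_pow_left₀ (norm_nonneg _) habs 2
    _ ≤ (∑ n, ∑ m, (Real.sqrt (g n m) * ‖A n m‖) ^ 2)
        * (∑ n, ∑ m, ‖B n m‖ ^ 2 *
            ((E m - E n) * (Real.exp (-E n) - Real.exp (-E m)))) := hCS
    _ ≤ (1/2) * (∑ n, ∑ m, ‖A n m‖ ^ 2 * (Real.exp (-E n) + Real.exp (-E m)))
        * (∑ n, ∑ m, ‖B n m‖ ^ 2 *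
            ((E m - E n) * (Real.exp (-E n) - Real.exp (-E m)))) :=
        mul_le_mul_of_nonneg_right hA hBnn

/- ------------------ trace formulas ------------------- -/

lemma trace_mul_diag {N : ℕ} (w : Fin N → ℂ) (M : Matrix (Fin N) (Fin N) ℂ) :
    (M * Matrix.diagonal w).trace = ∑ n, M n n * w n := by
  simp [Matrix.trace, Matrix.diag, Matrix.mul_diagonal]

lemma comm_trace {N : ℕ} (w : Fin N → ℂ) (X Y : Matrix (Fin N) (Fin N) ℂ) :
    ((X * Y - Y * X) * Matrix.diagonal w).trace
      = ∑ n, ∑ m, X n m * Y m n * (w n - w m) := by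
  rw [Matrix.sub_mul, Matrix.trace_sub, trace_mul_diag, trace_mul_diag]
  have h1 : ∑ n, (X * Y) n n * w n = ∑ n, ∑ m, X n m * Y m n * w n :=
    Finset.sum_congr rfl fun n _ => by rw [Matrix.mul_apply, Finset.sum_mul]
  have h2 : ∑ n, (Y * X) n n * w n = ∑ n, ∑ m, X n m * Y m n * w m := by
    rw [show ∑ n, (Y * X) n n * w n = ∑ n, ∑ m, Y n m * X m n * w n from
      Finset.sum_congr rfl fun n _ => by rw [Matrix.mul_apply, Finset.sum_mul]]
    rw [Finset.sum_comm]
    exact Finset.sum_congr rfl fun n _ => Finset.sum_congr rfl fun m _ => by ring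
  rw [h1, h2, ← Finset.sum_sub_distrib]
  refine Finset.sum_congr rfl fun n _ => ?_
  rw [← Finset.sum_sub_distrib]
  exact Finset.sum_congr rfl fun m _ => by ring

lemma plus_trace {N : ℕ} (w : Fin N → ℂ) (Y : Matrix (Fin N) (Fin N) ℂ) :
    ((Yᴴ * Y + Y * Yᴴ) * Matrix.diagonal w).trace
      = ∑ n, ∑ m, (Y n m * (starRingEnd ℂ) (Y n m)) * (w n + w m) := by
  rw [Matrix.add_mul, Matrix.trace_add, trace_mul_diag, trace_mul_diag]
  have h1 : ∑ n, (Yᴴ * Y) n n * w n = ∑ n, ∑ m, (Y n m * (starRingEnd ℂ) (Y n m)) * w m := by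
    rw [show ∑ n, (Yᴴ * Y) n n * w n
        = ∑ n, ∑ m, (starRingEnd ℂ) (Y m n) * Y m n * w n from
      Finset.sum_congr rfl fun n _ => by
        rw [Matrix.mul_apply, Finset.sum_mul]
        exact Finset.sum_congr rfl fun m _ => by
          rw [Matrix.conjTranspose_apply, starRingEnd_apply]]
    rw [Finset.sum_comm]
    exact Finset.sum_congr rfl fun n _ => Finset.sum_congr rfl fun m _ => by ring
  have h2 : ∑ n, (Y * Yᴴ) n n * w n = ∑ n, ∑ m, (Y n m * (starRingEnd ℂ) (Y n m)) * w n :=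
    Finset.sum_congr rfl fun n _ => by
      rw [Matrix.mul_apply, Finset.sum_mul]
      exact Finset.sum_congr rfl fun m _ => by
        rw [Matrix.conjTranspose_apply, starRingEnd_apply]
  rw [h1, h2, ← Finset.sum_add_distrib]
  refine Finset.sum_congr rfl fun n _ => ?_
  rw [← Finset.sum_add_distrib]
  exact Finset.sum_congr rfl fun m _ => by ring

end BogolubovAux

open BogolubovAux in
theorem stmt17 (N : ℕ) (H : Matrix (Fin N) (Fin N) ℂ) (hH : H.IsHermitian)
    (A B : Matrix (Fin N) (Fin N) ℂ) :
    ‖gibbsState N H (B * Aᴴ - Aᴴ * B)‖ ^ 2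
      ≤ (1/2) * (gibbsState N H (Aᴴ * A + A * Aᴴ)).re *
          (gibbsState N H ((B * H - H * B) * Bᴴ - Bᴴ * (B * H - H * B))).re := by
  classical
  rcases Nat.eq_zero_or_pos N with hN | hN
  · subst hN
    simp [gibbsState, Matrix.trace]
  -- setup: spectral decomposition
  set E : Fin N → ℝ := hH.eigenvalues with hE
  set U : Matrix (Fin N) (Fin N) ℂ := (hH.eigenvectorUnitary : Matrix (Fin N) (Fin N) ℂ)
    with hUdef
  have hUU : U * star U = 1 := (Matrix.mem_unitaryGroup_iff).mp hH.eigenvectorUnitary.2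
  have hsUU : star U * U = 1 := (Matrix.mem_unitaryGroup_iff').mp hH.eigenvectorUnitary.2
  have hinv : U⁻¹ = star U := Matrix.inv_eq_left_inv hsUU
  have hUnit : IsUnit U := ⟨⟨U, star U, hUU, hsUU⟩, rfl⟩
  set D : Matrix (Fin N) (Fin N) ℂ := Matrix.diagonal (fun i => (E i : ℂ)) with hDdef
  have hsp : H = U * D * star U := by
    have := hH.spectral_theorem
    rw [Unitary.conjStarAlgAut_apply] at this
    exact this
  set w : Fin N → ℂ := fun n => ((Real.exp (-E n) : ℝ) : ℂ) with hw
  have hexp : NormedSpace.exp (-H) = U * Matrix.diagonal w * star U := by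
    have hneg : -H = U * (-D) * U⁻¹ := by
      rw [hinv, hsp, Matrix.mul_neg, Matrix.neg_mul]
    rw [hneg, Matrix.exp_conj U (-D) hUnit, hinv]
    congr 2
    rw [hDdef, Matrix.diagonal_neg, Matrix.exp_diagonal, Pi.exp_def, hw]
    congr 1
    funext i
    rw [← Complex.exp_eq_exp_ℂ]
    push_cast
    rfl
  -- trace reduction
  have htrace : ∀ X : Matrix (Fin N) (Fin N) ℂ,
      (X * NormedSpace.exp (-H)).trace = ((star U * X * U) * Matrix.diagonal w).trace := by
    intro X
    rw [hexp]
    rw [show X * (U * Matrix.diagonal w * star U)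
        = (X * (U * Matrix.diagonal w)) * star U by simp only [Matrix.mul_assoc]]
    rw [Matrix.trace_mul_comm]
    simp only [Matrix.mul_assoc]
  set Zr : ℝ := ∑ n, Real.exp (-E n) with hZr
  have hZrpos : 0 < Zr := by
    have : Nonempty (Fin N) := Fin.pos_iff_nonempty.mp hN
    exact Finset.sum_pos (fun n _ => Real.exp_pos _) Finset.univ_nonempty
  have hZ : (NormedSpace.exp (-H)).trace = ((Zr : ℝ) : ℂ) := by
    rw [← Matrix.one_mul (NormedSpace.exp (-H)), htrace, Matrix.mul_one, hsUU,
      Matrix.one_mul, Matrix.trace_diagonal, hZr]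
    push_cast
    simp [hw]
  -- conjugation homomorphism facts
  have hφmul : ∀ X Y : Matrix (Fin N) (Fin N) ℂ,
      star U * (X * Y) * U = (star U * X * U) * (star U * Y * U) := by
    intro X Y
    have h : (star U * X * U) * (star U * Y * U) = star U * X * (U * star U) * Y * U := by
      simp only [Matrix.mul_assoc]
    rw [h, hUU, Matrix.mul_one]
    simp only [Matrix.mul_assoc]
  have hφstar : ∀ X : Matrix (Fin N) (Fin N) ℂ,
      star U * Xᴴ * U = (star U * X * U)ᴴ := by
    intro X
    rw [Matrix.star_eq_conjTranspose]
    simp only [Matrix.conjTranspose_mul, Matrix.conjTranspose_conjTranspose]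
    simp only [Matrix.mul_assoc]
  have hφH : star U * H * U = D := by
    rw [hsp]
    have h : star U * (U * D * star U) * U = (star U * U) * D * (star U * U) := by
      simp only [Matrix.mul_assoc]
    rw [h, hsUU, Matrix.one_mul, Matrix.mul_one]
  -- abbreviations for the conjugated matrices
  set A' : Matrix (Fin N) (Fin N) ℂ := star U * A * U with hA'
  set B' : Matrix (Fin N) (Fin N) ℂ := star U * B * U with hB'
  -- numerator 1
  have hnum1 : star U * (B * Aᴴ - Aᴴ * B) * U = B' * A'ᴴ - A'ᴴ * B' := by
    rw [Matrix.mul_sub, Matrix.sub_mul, hφmul, hφmul, hφstar]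
  -- numerator 2
  have hnum2 : star U * (Aᴴ * A + A * Aᴴ) * U = A'ᴴ * A' + A' * A'ᴴ := by
    rw [Matrix.mul_add, Matrix.add_mul, hφmul, hφmul, hφstar]
  -- numerator 3
  have hBH : star U * (B * H - H * B) * U = B' * D - D * B' := by
    rw [Matrix.mul_sub, Matrix.sub_mul, hφmul, hφmul, hφH]
  have hnum3 : star U * ((B * H - H * B) * Bᴴ - Bᴴ * (B * H - H * B)) * U
      = (B' * D - D * B') * B'ᴴ - B'ᴴ * (B' * D - D * B') := by
    rw [Matrix.mul_sub, Matrix.sub_mul, hφmul, hφmul, hφstar, hBH]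
  -- the three Gibbs expectation values
  have hg1 : gibbsState N H (B * Aᴴ - Aᴴ * B)
      = (∑ n, ∑ m, B' n m * (starRingEnd ℂ) (A' n m) *
          ((Real.exp (-E n) - Real.exp (-E m) : ℝ) : ℂ)) / ((Zr : ℝ) : ℂ) := by
    rw [gibbsState, htrace, hZ, hnum1, comm_trace]
    congr 1
    refine Finset.sum_congr rfl fun n _ => Finset.sum_congr rfl fun m _ => ?_
    rw [Matrix.conjTranspose_apply, starRingEnd_apply]
    simp only [hw]
    push_cast
    ring
  have hg2 : (gibbsState N H (Aᴴ * A + A * Aᴴ)).re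
      = (∑ n, ∑ m, ‖A' n m‖ ^ 2 * (Real.exp (-E n) + Real.exp (-E m))) / Zr := by
    rw [gibbsState, htrace, hZ, hnum2, plus_trace]
    rw [show (∑ n, ∑ m, (A' n m * (starRingEnd ℂ) (A' n m)) * (w n + w m))
        = (((∑ n, ∑ m, ‖A' n m‖ ^ 2 *
            (Real.exp (-E n) + Real.exp (-E m))) : ℝ) : ℂ) by
      simp only [hw]
      push_cast
      refine Finset.sum_congr rfl fun n _ => Finset.sum_congr rfl fun m _ => ?_
      rw [Complex.mul_conj, Complex.normSq_eq_norm_sq]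
      push_cast
      ring]
    rw [← Complex.ofReal_div, Complex.ofReal_re]
  have hg3 : (gibbsState N H ((B * H - H * B) * Bᴴ - Bᴴ * (B * H - H * B))).re
      = (∑ n, ∑ m, ‖B' n m‖ ^ 2 *
          ((E m - E n) * (Real.exp (-E n) - Real.exp (-E m)))) / Zr := by
    rw [gibbsState, htrace, hZ, hnum3, comm_trace]
    rw [show (∑ n, ∑ m, (B' * D - D * B') n m * (B'ᴴ) m n * (w n - w m))
        = (((∑ n, ∑ m, ‖B' n m‖ ^ 2 *
            ((E m - E n) * (Real.exp (-E n) - Real.exp (-E m)))) : ℝ) : ℂ) by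
      simp only [hw]
      push_cast
      refine Finset.sum_congr rfl fun n _ => Finset.sum_congr rfl fun m _ => ?_
      rw [Matrix.sub_apply, Matrix.mul_diagonal, Matrix.diagonal_mul,
        Matrix.conjTranspose_apply]
      have hz : B' n m * star (B' n m) = ((‖B' n m‖ : ℝ) : ℂ) ^ 2 := by
        rw [show star (B' n m) = (starRingEnd ℂ) (B' n m) from rfl, Complex.mul_conj,
          Complex.normSq_eq_norm_sq]
        push_cast
        rfl
      linear_combination ((E m : ℂ) - (E n : ℂ)) *
        (Complex.exp (-(E n : ℂ)) - Complex.exp (-(E m : ℂ))) * hz]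
    rw [← Complex.ofReal_div, Complex.ofReal_re]
  -- assemble
  rw [hg1, hg2, hg3]
  rw [norm_div, Complex.norm_real, Real.norm_eq_abs, abs_of_pos hZrpos, div_pow]
  have hcore := core N E A' B'
  have hfinal : (1/2) * ((∑ n, ∑ m, ‖A' n m‖ ^ 2 *
          (Real.exp (-E n) + Real.exp (-E m))) / Zr)
        * ((∑ n, ∑ m, ‖B' n m‖ ^ 2 *
          ((E m - E n) * (Real.exp (-E n) - Real.exp (-E m)))) / Zr)
      = ((1/2) * (∑ n, ∑ m, ‖A' n m‖ ^ 2 * (Real.exp (-E n) + Real.exp (-E m)))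
        * (∑ n, ∑ m, ‖B' n m‖ ^ 2 *
            ((E m - E n) * (Real.exp (-E n) - Real.exp (-E m))))) / Zr ^ 2 := by
    ring
  rw [hfinal]
  exact (div_le_div_iff_of_pos_right (pow_pos hZrpos 2)).mpr hcore
end
end

section
/- For every operator A on ℋ one has (A,A) ≤ (1/2)⟨A*A + AA*⟩, with equality if and only if [A,H] = 0. -/
noncomputable section
open scoped BigOperators Matrix

open NormedSpace

/-! ### Real-analytic auxiliary lemmas -/

lemma aux_g_pos {t : ℝ} (ht : 0 < t) :
    0 < t * (1 + Real.exp (-t)) - 2 * (1 - Real.exp (-t)) := by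
  set g : ℝ → ℝ := fun t => t * (1 + Real.exp (-t)) - 2 * (1 - Real.exp (-t)) with hg
  have hderiv : ∀ x : ℝ, HasDerivAt g (1 - Real.exp (-x) * (1 + x)) x := by
    intro x
    have h1 : HasDerivAt (fun x : ℝ => Real.exp (-x)) (-Real.exp (-x)) x := by
      exact ((Real.hasDerivAt_exp (-x)).comp x (hasDerivAt_neg x)).congr_deriv (by ring)
    have h2 : HasDerivAt (fun x : ℝ => x * (1 + Real.exp (-x)))
        (1 * (1 + Real.exp (-x)) + x * (0 + -Real.exp (-x))) x :=
      (hasDerivAt_id x).mul ((hasDerivAt_const x 1).add h1)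
    have h3 : HasDerivAt (fun x : ℝ => 2 * (1 - Real.exp (-x)))
        (2 * (0 - (-Real.exp (-x)))) x :=
      ((hasDerivAt_const x (1:ℝ)).sub h1).const_mul 2
    have := h2.sub h3
    exact this.congr_deriv (by ring)
  have hmono : StrictMonoOn g (Set.Ici (0:ℝ)) := by
    apply strictMonoOn_of_deriv_pos (convex_Ici 0)
    · exact Continuous.continuousOn (by continuity)
    · intro x hx
      rw [interior_Ici] at hx
      rw [(hderiv x).deriv]
      have : Real.exp (-x) * (1 + x) < 1 := by
        rw [Real.exp_neg, inv_mul_lt_iff₀ (Real.exp_pos x), mul_one]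
        have := Real.add_one_lt_exp (x := x) (Set.mem_Ioi.mp hx).ne'
        linarith
      linarith
  have := hmono (Set.self_mem_Ici) (Set.mem_Ici.mpr ht.le) ht
  simpa [hg] using this

/-- closed form of the Duhamel integrand integral when `a ≠ b`. -/
lemma duhamel_int_closed (a b : ℝ) (hab : a ≠ b) :
    (∫ s in (0:ℝ)..1, Real.exp (-(1-s)*a - s*b))
      = (Real.exp (-a) - Real.exp (-b)) / (b - a) := by
  have h1 : ∀ s : ℝ, -(1-s)*a - s*b = (a - b) * s + (-a) := by intro s; ring
  simp_rw [h1, Real.exp_add, intervalIntegral.integral_mul_const]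
  have hc : a - b ≠ 0 := sub_ne_zero.mpr hab
  rw [intervalIntegral.integral_comp_mul_left (fun x => Real.exp x) hc]
  rw [mul_zero, mul_one, integral_exp, smul_eq_mul]
  rw [Real.exp_zero, inv_mul_eq_div, div_mul_eq_mul_div,
    div_eq_div_iff hc (sub_ne_zero.mpr (Ne.symm hab))]
  have : Real.exp (a - b) * Real.exp (-a) = Real.exp (-b) := by
    rw [← Real.exp_add]; ring_nf
  linear_combination (b - a) * this

lemma duhamel_int_same (a : ℝ) :
    (∫ s in (0:ℝ)..1, Real.exp (-(1-s)*a - s*a)) = Real.exp (-a) := by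
  have h1 : ∀ s : ℝ, -(1-s)*a - s*a = -a := by intro s; ring
  simp_rw [h1]
  simp

lemma duhamel_int_lt (a b : ℝ) (hab : a ≠ b) :
    (∫ s in (0:ℝ)..1, Real.exp (-(1-s)*a - s*b))
      < (Real.exp (-a) + Real.exp (-b)) / 2 := by
  rw [duhamel_int_closed a b hab]
  have key : ∀ a b : ℝ, a < b →
      (Real.exp (-a) - Real.exp (-b)) / (b - a) < (Real.exp (-a) + Real.exp (-b)) / 2 := by
    intro a b h
    set t := b - a with htdef
    have ht : 0 < t := sub_pos.mpr h
    have hb : b = a + t := by ring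
    have h2 : Real.exp (-b) = Real.exp (-a) * Real.exp (-t) := by
      rw [hb, ← Real.exp_add]; ring_nf
    rw [h2]
    rw [div_lt_div_iff₀ ht two_pos]
    have hg := aux_g_pos ht
    have hea := Real.exp_pos (-a)
    nlinarith [Real.exp_pos (-t)]
  rcases lt_or_gt_of_ne hab with h | h
  · exact key a b h
  · have := key b a h
    have hrw : (Real.exp (-b) - Real.exp (-a)) / (a - b)
        = (Real.exp (-a) - Real.exp (-b)) / (b - a) := by
      rw [div_eq_div_iff (sub_ne_zero.mpr (ne_of_gt h)) (sub_ne_zero.mpr (ne_of_lt h))]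
      ring
    rw [hrw] at this
    linarith

lemma duhamel_int_le (a b : ℝ) :
    (∫ s in (0:ℝ)..1, Real.exp (-(1-s)*a - s*b))
      ≤ (Real.exp (-a) + Real.exp (-b)) / 2 := by
  rcases eq_or_ne a b with rfl | h
  · rw [duhamel_int_same]; linarith [Real.exp_pos (-a)]
  · exact (duhamel_int_lt a b h).le

/-! ### Matrix auxiliary lemmas -/

variable {N : ℕ}

lemma star_mul_self_eigen (H : Matrix (Fin N) (Fin N) ℂ) (hH : H.IsHermitian) :
    (star (hH.eigenvectorUnitary : Matrix (Fin N) (Fin N) ℂ)) *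
      (hH.eigenvectorUnitary : Matrix (Fin N) (Fin N) ℂ) = 1 := by
  simpa using (Matrix.mem_unitaryGroup_iff'.mp hH.eigenvectorUnitary.2)

lemma mul_star_self_eigen (H : Matrix (Fin N) (Fin N) ℂ) (hH : H.IsHermitian) :
    (hH.eigenvectorUnitary : Matrix (Fin N) (Fin N) ℂ) *
      (star (hH.eigenvectorUnitary : Matrix (Fin N) (Fin N) ℂ)) = 1 := by
  simpa using (Matrix.mem_unitaryGroup_iff.mp hH.eigenvectorUnitary.2)

lemma exp_smul_eigen (H : Matrix (Fin N) (Fin N) ℂ) (hH : H.IsHermitian) (c : ℂ) :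
    exp (c • H) = (hH.eigenvectorUnitary : Matrix (Fin N) (Fin N) ℂ) *
      Matrix.diagonal (fun i => Complex.exp (c * hH.eigenvalues i)) *
      (star (hH.eigenvectorUnitary : Matrix (Fin N) (Fin N) ℂ)) := by
  set U : Matrix (Fin N) (Fin N) ℂ := (hH.eigenvectorUnitary : Matrix (Fin N) (Fin N) ℂ) with hU
  have hUnit : IsUnit U :=
    ⟨⟨U, star U, mul_star_self_eigen H hH, star_mul_self_eigen H hH⟩, rfl⟩
  have hinv : U⁻¹ = star U := Matrix.inv_eq_left_inv (star_mul_self_eigen H hH)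
  have hspec : c • H = U * (c • Matrix.diagonal (RCLike.ofReal ∘ hH.eigenvalues)) * star U := by
    conv_lhs => rw [hH.spectral_theorem, Unitary.conjStarAlgAut_apply]
    rw [Matrix.mul_smul, Matrix.smul_mul]
  rw [hspec, ← hinv, Matrix.exp_conj U _ hUnit, hinv]
  congr 2
  rw [← Matrix.diagonal_smul, Matrix.exp_diagonal]
  apply congrArg Matrix.diagonal
  funext i
  rw [Pi.coe_exp]
  simp [Complex.exp_eq_exp_ℂ]

lemma trace_sandwich (H : Matrix (Fin N) (Fin N) ℂ) (hH : H.IsHermitian)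
    (X : Matrix (Fin N) (Fin N) ℂ) (c d : ℂ) :
    (exp (c • H) * Xᴴ * exp (d • H) * X).trace =
      ∑ i, ∑ j, Complex.exp (c * hH.eigenvalues i) * Complex.exp (d * hH.eigenvalues j) *
        (Complex.normSq ((star (hH.eigenvectorUnitary : Matrix (Fin N) (Fin N) ℂ) * X *
          (hH.eigenvectorUnitary : Matrix (Fin N) (Fin N) ℂ)) j i) : ℂ) := by
  set U : Matrix (Fin N) (Fin N) ℂ := (hH.eigenvectorUnitary : Matrix (Fin N) (Fin N) ℂ) with hUdef
  set B : Matrix (Fin N) (Fin N) ℂ := star U * X * U with hBdef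
  set Ec := Matrix.diagonal (fun i => Complex.exp (c * hH.eigenvalues i)) with hEc
  set Ed := Matrix.diagonal (fun i => Complex.exp (d * hH.eigenvalues i)) with hEd
  have hB : Bᴴ = star U * (Xᴴ * U) := by
    rw [hBdef]
    simp only [Matrix.conjTranspose_mul, Matrix.star_eq_conjTranspose,
      Matrix.conjTranspose_conjTranspose, Matrix.mul_assoc]
  rw [exp_smul_eigen H hH c, exp_smul_eigen H hH d]
  simp only [Matrix.mul_assoc]
  rw [Matrix.trace_mul_comm]
  have h2 : Ec * (star U * (Xᴴ * (U * (Ed * (star U * X))))) * U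
      = Ec * (Bᴴ * (Ed * B)) := by
    rw [hB, hBdef]
    simp only [Matrix.mul_assoc]
  rw [h2]
  have h3 : (Ec * (Bᴴ * (Ed * B))).trace
      = ∑ i, Complex.exp (c * hH.eigenvalues i) * ((Bᴴ * (Ed * B)) i i) := by
    rw [Matrix.trace]
    apply Finset.sum_congr rfl
    intro i _
    rw [Matrix.diag_apply, hEc, Matrix.diagonal_mul]
  rw [h3]
  apply Finset.sum_congr rfl
  intro i _
  rw [Matrix.mul_apply, Finset.mul_sum]
  apply Finset.sum_congr rfl
  intro j _
  rw [hEd, Matrix.diagonal_mul, Matrix.conjTranspose_apply]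
  rw [show (Complex.normSq (B j i) : ℂ) = star (B j i) * B j i from
    Complex.normSq_eq_conj_mul_self]
  ring

theorem stmt18 (N : ℕ) (H : Matrix (Fin N) (Fin N) ℂ) (hH : H.IsHermitian)
    (A : Matrix (Fin N) (Fin N) ℂ) :
    (duhamelInner N H A A).re ≤ (1/2) * (gibbsState N H (Aᴴ * A + A * Aᴴ)).re ∧
    ((duhamelInner N H A A).re = (1/2) * (gibbsState N H (Aᴴ * A + A * Aᴴ)).re
      ↔ A * H = H * A) := by
  rcases Nat.eq_zero_or_pos N with hN | hN
  · subst hN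
    have hA : A * H = H * A := Subsingleton.elim _ _
    have h0 : ∀ M : Matrix (Fin 0) (Fin 0) ℂ, M.trace = 0 := by
      intro M; simp [Matrix.trace]
    constructor
    · simp [duhamelInner, gibbsState, h0]
    · simp [duhamelInner, gibbsState, h0, hA]
  -- main case
  set U : Matrix (Fin N) (Fin N) ℂ := (hH.eigenvectorUnitary : Matrix (Fin N) (Fin N) ℂ)
    with hUdef
  set μ : Fin N → ℝ := hH.eigenvalues with hμ
  set B : Matrix (Fin N) (Fin N) ℂ := star U * A * U with hBdef
  set w : Fin N → Fin N → ℝ := fun j i => Complex.normSq (B j i) with hwdef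
  set Z : ℝ := ∑ i, Real.exp (-μ i) with hZdef
  have hFinpos : Nonempty (Fin N) := ⟨⟨0, hN⟩⟩
  have hZpos : 0 < Z := Finset.sum_pos (fun i _ => Real.exp_pos _) Finset.univ_nonempty
  have hexp0 : exp ((0:ℂ) • H) = 1 := by rw [zero_smul, exp_zero]
  have hexpneg : exp ((-1:ℂ) • H) = exp (-H) := by rw [neg_one_smul]
  have hUU : U * star U = 1 := mul_star_self_eigen H hH
  have hU'U : star U * U = 1 := star_mul_self_eigen H hH
  have hUcancel : ∀ M : Matrix (Fin N) (Fin N) ℂ, U * (star U * M) = M := fun M => by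
    rw [← Matrix.mul_assoc, hUU, Matrix.one_mul]
  have hUcancel' : ∀ M : Matrix (Fin N) (Fin N) ℂ, star U * (U * M) = M := fun M => by
    rw [← Matrix.mul_assoc, hU'U, Matrix.one_mul]
  have htraceZ : (exp (-H)).trace = (Z : ℂ) := by
    rw [← hexpneg, exp_smul_eigen H hH (-1), Matrix.trace_mul_comm, ← Matrix.mul_assoc,
      star_mul_self_eigen H hH, Matrix.one_mul, Matrix.trace_diagonal, hZdef]
    push_cast
    apply Finset.sum_congr rfl
    intro i _
    congr 1
    push_cast
    ring
  have hnum1 : ((Aᴴ * A) * exp (-H)).trace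
      = ((∑ i, ∑ j, Real.exp (-μ i) * w j i : ℝ) : ℂ) := by
    rw [Matrix.trace_mul_comm]
    have h1 : exp (-H) * (Aᴴ * A) = exp ((-1:ℂ) • H) * Aᴴ * exp ((0:ℂ) • H) * A := by
      rw [hexp0, hexpneg, Matrix.mul_one, Matrix.mul_assoc]
    rw [h1, trace_sandwich H hH A (-1) 0]
    simp only [← hUdef, ← hμ, hwdef, ← hBdef]
    push_cast
    apply Finset.sum_congr rfl; intro i _
    apply Finset.sum_congr rfl; intro j _
    rw [zero_mul, Complex.exp_zero, mul_one]
    congr 2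
    ring
  have hnum2 : ((A * Aᴴ) * exp (-H)).trace
      = ((∑ i, ∑ j, Real.exp (-μ j) * w j i : ℝ) : ℂ) := by
    rw [Matrix.mul_assoc, Matrix.trace_mul_comm]
    have h1 : (Aᴴ * exp (-H)) * A = exp ((0:ℂ) • H) * Aᴴ * exp ((-1:ℂ) • H) * A := by
      rw [hexp0, hexpneg, Matrix.one_mul]
    rw [h1, trace_sandwich H hH A 0 (-1)]
    simp only [← hUdef, ← hμ, hwdef, ← hBdef]
    push_cast
    apply Finset.sum_congr rfl; intro i _
    apply Finset.sum_congr rfl; intro j _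
    rw [zero_mul, Complex.exp_zero, one_mul]
    congr 2
    ring
  have hgibbs : (gibbsState N H (Aᴴ * A + A * Aᴴ)).re
      = (∑ i, ∑ j, (Real.exp (-μ i) + Real.exp (-μ j)) * w j i) / Z := by
    rw [gibbsState, Matrix.add_mul, Matrix.trace_add, hnum1, hnum2, htraceZ,
      ← Complex.ofReal_add, ← Complex.ofReal_div, Complex.ofReal_re]
    congr 1
    rw [← Finset.sum_add_distrib]
    apply Finset.sum_congr rfl; intro i _
    rw [← Finset.sum_add_distrib]
    apply Finset.sum_congr rfl; intro j _
    ring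
  have hduh : (duhamelInner N H A A).re
      = (∑ i, ∑ j, (∫ s in (0:ℝ)..1, Real.exp (-(1-s)*μ i - s*μ j)) * w j i) / Z := by
    rw [duhamelInner, htraceZ]
    have h1 : ∀ s : ℝ, (exp ((-(1 - (s:ℂ))) • H) * Aᴴ * exp ((-(s:ℂ)) • H) * A).trace
        = ((∑ i, ∑ j, Real.exp (-(1-s)*μ i - s*μ j) * w j i : ℝ) : ℂ) := by
      intro s
      rw [trace_sandwich H hH A _ _]
      simp only [← hUdef, ← hμ, hwdef, ← hBdef]
      push_cast
      apply Finset.sum_congr rfl; intro i _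
      apply Finset.sum_congr rfl; intro j _
      rw [← Complex.exp_add]
      congr 2
      ring
    have h2 : (∫ s in (0:ℝ)..1,
          (exp ((-(1 - (s:ℂ))) • H) * Aᴴ * exp ((-(s:ℂ)) • H) * A).trace)
        = ((∫ s in (0:ℝ)..1, ∑ i, ∑ j, Real.exp (-(1-s)*μ i - s*μ j) * w j i : ℝ) : ℂ) := by
      rw [← intervalIntegral.integral_ofReal]
      exact intervalIntegral.integral_congr (fun s _ => h1 s)
    rw [h2]
    have h3 : (∫ s in (0:ℝ)..1, ∑ i, ∑ j, Real.exp (-(1-s)*μ i - s*μ j) * w j i)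
        = ∑ i, ∑ j, (∫ s in (0:ℝ)..1, Real.exp (-(1-s)*μ i - s*μ j)) * w j i := by
      rw [intervalIntegral.integral_finset_sum]
      · apply Finset.sum_congr rfl; intro i _
        rw [intervalIntegral.integral_finset_sum]
        · apply Finset.sum_congr rfl; intro j _
          rw [intervalIntegral.integral_mul_const]
        · intro j _
          apply Continuous.intervalIntegrable
          fun_prop
      · intro i _
        apply Continuous.intervalIntegrable
        apply continuous_finset_sum
        intro j _
        fun_prop
    rw [h3, ← Complex.ofReal_div, Complex.ofReal_re]
  have hineq : ∀ i j : Fin N,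
      (∫ s in (0:ℝ)..1, Real.exp (-(1-s)*μ i - s*μ j)) * w j i
        ≤ ((Real.exp (-μ i) + Real.exp (-μ j)) / 2) * w j i := fun i j =>
    mul_le_mul_of_nonneg_right (duhamel_int_le _ _) (Complex.normSq_nonneg _)
  have hhalf : (1/2) * (gibbsState N H (Aᴴ * A + A * Aᴴ)).re
      = (∑ i, ∑ j, ((Real.exp (-μ i) + Real.exp (-μ j)) / 2) * w j i) / Z := by
    rw [hgibbs]
    rw [div_mul_div_comm, one_mul]
    rw [show (∑ i, ∑ j, (Real.exp (-μ i) + Real.exp (-μ j)) * w j i) / (2 * Z)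
        = ((∑ i, ∑ j, (Real.exp (-μ i) + Real.exp (-μ j)) * w j i) / 2) / Z by
      rw [div_div]]
    congr 1
    rw [Finset.sum_div]
    apply Finset.sum_congr rfl; intro i _
    rw [Finset.sum_div]
    apply Finset.sum_congr rfl; intro j _
    ring
  constructor
  · rw [hduh, hhalf, div_le_div_iff₀ hZpos hZpos]
    exact mul_le_mul_of_nonneg_right
      (Finset.sum_le_sum fun i _ => Finset.sum_le_sum fun j _ => hineq i j) hZpos.le
  -- equality case
  have hDspec : star U * H * U = Matrix.diagonal (RCLike.ofReal ∘ μ) := by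
    conv_lhs => rw [hH.spectral_theorem, Unitary.conjStarAlgAut_apply]
    simp only [← hUdef, ← hμ, Matrix.mul_assoc, hU'U, Matrix.mul_one]
    exact hUcancel' _
  have hAU : A = U * B * star U := by
    rw [hBdef]
    simp only [Matrix.mul_assoc, hUU, Matrix.mul_one]
    exact (hUcancel _).symm
  have hcomm_iff : (A * H = H * A) ↔ ∀ i j, B i j * (μ j : ℂ) = (μ i : ℂ) * B i j := by
    constructor
    · intro h i j
      have hBD : B * Matrix.diagonal (RCLike.ofReal ∘ μ)
          = Matrix.diagonal (RCLike.ofReal ∘ μ) * B := by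
        rw [← hDspec, hBdef]
        simp only [Matrix.mul_assoc, hUcancel]
        rw [show A * (H * U) = H * (A * U) by
          rw [← Matrix.mul_assoc, h, Matrix.mul_assoc]]
      have := congrArg (fun M => M i j) hBD
      simpa [Matrix.mul_diagonal, Matrix.diagonal_mul] using this
    · intro h
      have hBD : B * Matrix.diagonal (RCLike.ofReal ∘ μ)
          = Matrix.diagonal (RCLike.ofReal ∘ μ) * B := by
        ext i j
        rw [Matrix.mul_diagonal, Matrix.diagonal_mul]
        exact h i j
      have hH' : H = U * Matrix.diagonal (RCLike.ofReal ∘ μ) * star U := hH.spectral_theorem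
      rw [hAU, hH']
      simp only [Matrix.mul_assoc, hUcancel, hUcancel']
      rw [show B * (Matrix.diagonal (RCLike.ofReal ∘ μ) * star U)
          = Matrix.diagonal (RCLike.ofReal ∘ μ) * (B * star U) by
        rw [← Matrix.mul_assoc, hBD, Matrix.mul_assoc]]
  constructor
  · -- equality → commute
    intro heq
    rw [hduh, hhalf, div_eq_div_iff hZpos.ne' hZpos.ne'] at heq
    have hS : (∑ i, ∑ j, (∫ s in (0:ℝ)..1, Real.exp (-(1-s)*μ i - s*μ j)) * w j i)
        = ∑ i, ∑ j, ((Real.exp (-μ i) + Real.exp (-μ j)) / 2) * w j i :=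
      mul_right_cancel₀ hZpos.ne' heq
    have hzero : ∑ i, ∑ j, (((Real.exp (-μ i) + Real.exp (-μ j)) / 2)
        - (∫ s in (0:ℝ)..1, Real.exp (-(1-s)*μ i - s*μ j))) * w j i = 0 := by
      simp only [sub_mul, Finset.sum_sub_distrib]
      rw [hS, sub_self]
    have hterm : ∀ i j : Fin N, (((Real.exp (-μ i) + Real.exp (-μ j)) / 2)
        - (∫ s in (0:ℝ)..1, Real.exp (-(1-s)*μ i - s*μ j))) * w j i = 0 := by
      have hnn : ∀ i j : Fin N, 0 ≤ (((Real.exp (-μ i) + Real.exp (-μ j)) / 2)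
          - (∫ s in (0:ℝ)..1, Real.exp (-(1-s)*μ i - s*μ j))) * w j i := fun i j =>
        mul_nonneg (sub_nonneg.mpr (duhamel_int_le _ _)) (Complex.normSq_nonneg _)
      have h1 := (Finset.sum_eq_zero_iff_of_nonneg
        (fun i _ => Finset.sum_nonneg (fun j _ => hnn i j))).mp hzero
      intro i j
      have h2 := (Finset.sum_eq_zero_iff_of_nonneg
        (fun j _ => hnn i j)).mp (h1 i (Finset.mem_univ i))
      exact h2 j (Finset.mem_univ j)
    apply hcomm_iff.mpr
    intro i j
    rcases eq_or_ne (μ i) (μ j) with hij | hij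
    · rw [show (μ j : ℂ) = (μ i : ℂ) by exact_mod_cast hij.symm]
      ring
    · have ht := hterm j i
      have hpos : 0 < (Real.exp (-μ j) + Real.exp (-μ i)) / 2
          - (∫ s in (0:ℝ)..1, Real.exp (-(1-s)*μ j - s*μ i)) :=
        sub_pos.mpr (duhamel_int_lt _ _ (Ne.symm hij))
      have hw0 : w i j = 0 := by
        rcases mul_eq_zero.mp ht with h' | h'
        · exact absurd h' hpos.ne'
        · exact h'
      have hB0 : B i j = 0 := by
        have h3 : Complex.normSq (B i j) = 0 := hw0
        exact Complex.normSq_eq_zero.mp h3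
      rw [hB0]
      ring
  · -- commute → equality
    intro h
    rw [hduh, hhalf]
    congr 1
    apply Finset.sum_congr rfl; intro i _
    apply Finset.sum_congr rfl; intro j _
    rcases eq_or_ne (μ i) (μ j) with hij | hij
    · rw [hij, duhamel_int_same, ← hij]
      congr 1
      rw [hij]
      ring
    · have hB0 : B j i = 0 := by
        have := (hcomm_iff.mp h) j i
        have hsub : ((μ j : ℂ) - (μ i : ℂ)) * B j i = 0 := by linear_combination -this
        rcases mul_eq_zero.mp hsub with h' | h'
        · exact absurd (by exact_mod_cast (sub_eq_zero.mp h').symm : μ i = μ j) hij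
        · exact h'
      rw [hwdef]
      simp [hB0]
end
end

section
/- The function Φ : (0,∞) → ℝ defined by Φ(s) = √s · coth(1/√s) is increasing and concave on (0,∞), and satisfies √s ≤ Φ(s) ≤ √s + s for all s > 0. -/
noncomputable section

/-!
With `t = 1 / √s` one finds `PhiFB' s = (t coth t + t² / sinh² t) / 2`. This is positive, and it
is increasing in `t` (hence decreasing in `s`) because its `t`-derivative has the sign of
`sinh² t cosh t + t sinh t - 2 t² cosh t`, which is nonnegative by the Taylor bounds
`sinh t ≥ t + t³ / 6` and `sinh t ≥ (t - t³ / 3) cosh t`. The two-sided bound is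
`1 ≤ coth t ≤ 1 + 1 / t`, the upper half because `cosh t - sinh t = e⁻ᵗ ≤ 1 ≤ sinh t / t`.
-/

open Real Set

lemma le_of_hasDerivAt_le {f g f' g' : ℝ → ℝ} {a x : ℝ} (hf : ∀ y, HasDerivAt f (f' y) y)
    (hg : ∀ y, HasDerivAt g (g' y) y) (ha : f a ≤ g a) (h' : ∀ y, a ≤ y → f' y ≤ g' y)
    (hx : a ≤ x) : f x ≤ g x :=
  image_le_of_deriv_right_le_deriv_boundary (fun y _ ↦ (hf y).continuousAt.continuousWithinAt)
    (fun y _ ↦ (hf y).hasDerivWithinAt) ha (fun y _ ↦ (hg y).continuousAt.continuousWithinAt)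
    (fun y _ ↦ (hg y).hasDerivWithinAt) (fun y hy ↦ h' y hy.1) ⟨hx, le_rfl⟩

namespace Real

variable {x : ℝ}

lemma one_add_sq_div_two_le_cosh (hx : 0 ≤ x) : 1 + x ^ 2 / 2 ≤ cosh x :=
  le_of_hasDerivAt_le (f := fun y ↦ 1 + y ^ 2 / 2) (f' := fun y ↦ y) (fun y ↦ by
      simpa using ((hasDerivAt_pow 2 y).div_const 2).const_add 1)
    hasDerivAt_cosh (by simp) (fun _ ↦ self_le_sinh_iff.mpr) hx

lemma add_pow_three_div_six_le_sinh (hx : 0 ≤ x) : x + x ^ 3 / 6 ≤ sinh x :=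
  le_of_hasDerivAt_le (f := fun y ↦ y + y ^ 3 / 6) (f' := fun y ↦ 1 + y ^ 2 / 2) (fun y ↦
      ((hasDerivAt_id' y).add ((hasDerivAt_pow 3 y).div_const 6)).congr_deriv (by ring))
    hasDerivAt_sinh (by simp) (fun _ ↦ one_add_sq_div_two_le_cosh) hx

lemma sinh_le_mul_cosh (hx : 0 ≤ x) : sinh x ≤ x * cosh x :=
  le_of_hasDerivAt_le hasDerivAt_sinh (fun y ↦ (hasDerivAt_id y).mul (hasDerivAt_cosh y))
    (by simp) (fun y hy ↦ by simpa using mul_nonneg hy (sinh_nonneg_iff.mpr hy)) hx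

lemma sub_pow_three_div_three_mul_cosh_le_sinh (hx : 0 ≤ x) :
    (x - x ^ 3 / 3) * cosh x ≤ sinh x :=
  le_of_hasDerivAt_le (f := fun y ↦ (y - y ^ 3 / 3) * cosh y)
    (f' := fun y ↦ (1 - y ^ 2) * cosh y + (y - y ^ 3 / 3) * sinh y)
    (fun y ↦ (((hasDerivAt_id' y).sub ((hasDerivAt_pow 3 y).div_const 3)).mul
      (hasDerivAt_cosh y)).congr_deriv (by simp only [Pi.sub_apply]; ring))
    hasDerivAt_sinh (by simp) (fun y hy ↦ by
      have hsinh := mul_le_mul_of_nonneg_left (sinh_le_mul_cosh hy) hy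
      have hcube := mul_nonneg (pow_nonneg hy 3) (sinh_nonneg_iff.mpr hy)
      nlinarith) hx

lemma two_mul_sq_mul_cosh_le (hx : 0 ≤ x) :
    2 * x ^ 2 * cosh x ≤ sinh x ^ 2 * cosh x + x * sinh x := by
  have hsinh := add_pow_three_div_six_le_sinh hx
  have htanh := mul_le_mul_of_nonneg_left (sub_pow_three_div_three_mul_cosh_le_sinh hx) hx
  have hsq : (x + x ^ 3 / 6) ^ 2 ≤ sinh x ^ 2 := pow_le_pow_left₀ (by positivity) hsinh 2
  have hc := cosh_pos x
  nlinarith [mul_le_mul_of_nonneg_right hsq hc.le, mul_nonneg (pow_nonneg hx 6) hc.le]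

lemma one_le_cosh_div_sinh (hx : 0 < x) : 1 ≤ cosh x / sinh x := by
  rw [one_le_div (sinh_pos_iff.mpr hx)]
  linarith [exp_pos (-x), cosh_sub_sinh x]

lemma cosh_div_sinh_le_one_add_inv (hx : 0 < x) : cosh x / sinh x ≤ 1 + x⁻¹ := by
  have hs := sinh_pos_iff.mpr hx
  have h1 : 1 ≤ sinh x / x := (one_le_div hx).mpr (self_le_sinh_iff.mpr hx.le)
  have h2 : exp (-x) ≤ 1 := exp_le_one_iff.mpr (by linarith)
  rw [div_le_iff₀ hs, add_mul, one_mul, ← div_eq_inv_mul]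
  linarith [cosh_sub_sinh x]

end Real

def PhiFBSlope (t : ℝ) : ℝ :=
  (t * cosh t / sinh t + (t / sinh t) ^ 2) / 2

lemma hasDerivAt_PhiFB {s : ℝ} (hs : 0 < s) : HasDerivAt PhiFB (PhiFBSlope (1 / √s)) s := by
  have hu : 0 < √s := sqrt_pos.mpr hs
  have hsh : sinh (1 / √s) ≠ 0 := (sinh_pos_iff.mpr (by positivity)).ne'
  have hsqrt : HasDerivAt sqrt (1 / (2 * √s)) s := hasDerivAt_sqrt hs.ne'
  have hinv : HasDerivAt (fun x ↦ 1 / √x) (-(1 / (2 * √s)) / √s ^ 2) s := by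
    simpa only [one_div] using hsqrt.fun_inv hu.ne'
  refine (hsqrt.fun_mul (hinv.cosh.fun_div hinv.sinh hsh)).congr_deriv ?_
  unfold PhiFBSlope
  field_simp
  linear_combination cosh_sq (1 / √s)

lemma hasDerivAt_PhiFBSlope {t : ℝ} (ht : t ≠ 0) : HasDerivAt PhiFBSlope
    ((sinh t ^ 2 * cosh t + t * sinh t - 2 * t ^ 2 * cosh t) / (2 * sinh t ^ 3)) t := by
  have hsh : sinh t ≠ 0 := sinh_ne_zero.mpr ht
  have h := ((((hasDerivAt_id' t).fun_mul (hasDerivAt_cosh t)).fun_div (hasDerivAt_sinh t)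
    hsh).add (((hasDerivAt_id' t).fun_div (hasDerivAt_sinh t) hsh).pow 2)).div_const 2
  refine h.congr_deriv ?_
  simp only [Nat.cast_ofNat, Nat.reduceSub, pow_one]
  field_simp
  linear_combination (-t * sinh t) * cosh_sq t

lemma PhiFBSlope_pos {t : ℝ} (ht : 0 < t) : 0 < PhiFBSlope t := by
  have hsh := sinh_pos_iff.mpr ht
  unfold PhiFBSlope
  positivity

lemma monotoneOn_PhiFBSlope : MonotoneOn PhiFBSlope (Ioi 0) := by
  have hderiv (t : ℝ) (ht : t ∈ Ioi 0) := hasDerivAt_PhiFBSlope (ne_of_gt ht)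
  refine monotoneOn_of_deriv_nonneg (convex_Ioi 0)
    (fun t ht ↦ (hderiv t ht).continuousAt.continuousWithinAt)
    (fun t ht ↦ (hderiv t (interior_subset ht)).differentiableAt.differentiableWithinAt)
    (fun t ht ↦ ?_)
  rw [interior_Ioi] at ht
  rw [(hderiv t ht).deriv]
  have hsh := sinh_pos_iff.mpr ht
  exact div_nonneg (by linarith [two_mul_sq_mul_cosh_le (le_of_lt ht)]) (by positivity)

lemma sqrt_le_PhiFB {s : ℝ} (hs : 0 < s) : √s ≤ PhiFB s :=
  le_mul_of_one_le_right (sqrt_nonneg s) (one_le_cosh_div_sinh (by positivity))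

lemma PhiFB_le_sqrt_add_self {s : ℝ} (hs : 0 < s) : PhiFB s ≤ √s + s := by
  have h := cosh_div_sinh_le_one_add_inv (x := 1 / √s) (by positivity)
  rw [one_div, inv_inv, ← one_div] at h
  calc PhiFB s ≤ √s * (1 + √s) := mul_le_mul_of_nonneg_left h (sqrt_nonneg s)
    _ = √s + s := by rw [mul_one_add, mul_self_sqrt hs.le]

lemma strictMonoOn_PhiFB : StrictMonoOn PhiFB (Ioi 0) :=
  strictMonoOn_of_deriv_pos (convex_Ioi 0)
    (fun s hs ↦ (hasDerivAt_PhiFB hs).continuousAt.continuousWithinAt)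
    (fun s hs ↦ by
      rw [interior_Ioi] at hs
      rw [(hasDerivAt_PhiFB hs).deriv]
      exact PhiFBSlope_pos (one_div_pos.mpr (sqrt_pos.mpr hs)))

lemma antitoneOn_deriv_PhiFB : AntitoneOn (deriv PhiFB) (Ioi 0) := by
  intro a ha b hb hab
  rw [(hasDerivAt_PhiFB ha).deriv, (hasDerivAt_PhiFB hb).deriv]
  exact monotoneOn_PhiFBSlope (one_div_pos.mpr (sqrt_pos.mpr hb))
    (one_div_pos.mpr (sqrt_pos.mpr ha))
    (one_div_le_one_div_of_le (sqrt_pos.mpr ha) (sqrt_le_sqrt hab))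

lemma concaveOn_PhiFB : ConcaveOn ℝ (Ioi 0) PhiFB :=
  AntitoneOn.concaveOn_of_deriv (convex_Ioi 0)
    (fun s hs ↦ (hasDerivAt_PhiFB hs).continuousAt.continuousWithinAt)
    (fun s hs ↦ (hasDerivAt_PhiFB (interior_subset hs)).differentiableAt.differentiableWithinAt)
    (by rw [interior_Ioi]; exact antitoneOn_deriv_PhiFB)

theorem stmt19 :
    StrictMonoOn PhiFB (Set.Ioi 0) ∧
    ConcaveOn ℝ (Set.Ioi 0) PhiFB ∧
    ∀ s : ℝ, 0 < s → Real.sqrt s ≤ PhiFB s ∧ PhiFB s ≤ Real.sqrt s + s :=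
  ⟨strictMonoOn_PhiFB, concaveOn_PhiFB, fun _ hs ↦ ⟨sqrt_le_PhiFB hs, PhiFB_le_sqrt_add_self hs⟩⟩
end
end
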